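/- Let p ≤ n and let (l_1,...,l_p) be a generic family of linear forms on ℂ^n (i.e., l_1,...,l_p are linearly independent). Then the Bernstein ideal ℬ(l_1,...,l_p) is the principal ideal of ℂ[s_1,...,s_p] generated by ∏_{i=1}^p (s_i + 1). -/

import Mathlib

/-!
For `⊇`, linear independence gives vectors `u_j` with `l_k(u_j) = δ_jk`. The twisted derivative
`∂_{u_j} + ∑ₖ sₖ l_k(u_j)/l_k = ∂_{u_j} + s_j/l_j` sends `l_j·g` to `(s_j + 1)·g` whenever
`∂_{u_j} g = 0`, so applying these operators for `j = 1, …, p` to `H = l₁⋯l_p` produces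
`∏ⱼ (s_j + 1)`.

For `⊆`, fix `j` and let `S_j` be the algebra generated by the `xᵢ`, the `sₖ` and
`1/∏_{m≠j} l_m`: the functions regular along `l_j = 0`. The space `(s_j + 1)·R + l_j·S_j`
contains `H` and is stable under the generators of `𝒟`, hence contains `P·H = b(s)`. Restricting
to a line `x = ξ + tη` on which `l_j = t` and `l_k = 1` for `k ≠ j`, and setting `s_j = -1`, sends
`S_j` into `ℂ[s][t]` and this space into `t·ℂ[s][t]`; so `b` vanishes at `s_j = -1`, i.e.
`s_j + 1 ∣ b`, and dividing out one factor at a time gives `∏ⱼ (s_j + 1) ∣ b`.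
-/

open MvPolynomial

namespace Paper

/-- The ring `ℂ[x₁,…,xₙ, s₁,…,s_p, y]`; variable `some (Sum.inl i)` is `xᵢ`,
`some (Sum.inr j)` is `sⱼ`, and `none` is `y`, destined to be `1/(l₁⋯l_p)`. -/
abbrev A (n p : ℕ) := MvPolynomial (Option (Fin n ⊕ Fin p)) ℂ

variable (n p : ℕ)

noncomputable def xv (i : Fin n) : A n p := X (some (Sum.inl i))
noncomputable def sv (j : Fin p) : A n p := X (some (Sum.inr j))
noncomputable def yv : A n p := X none

/-- A linear form on `ℂⁿ`, given by its coefficients, as a polynomial. -/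
noncomputable def lf (c : Fin n → ℂ) : A n p := ∑ i, MvPolynomial.C (c i) * xv n p i

/-- The value of a constant vector field `u` on a linear form with coefficients `c`. -/
noncomputable def ap {n : ℕ} (u c : Fin n → ℂ) : ℂ := ∑ m, u m * c m

/-- A family of linear forms is generic if every subfamily of `n` of them is
linearly independent. -/
def Generic {n p : ℕ} (l : Fin p → Fin n → ℂ) : Prop :=
  ∀ S : Finset (Fin p), S.card = n → LinearIndependent ℂ (fun i : S => l i.1)

variable (l : Fin p → Fin n → ℂ)

/-- The product `H = l₁ ⋯ l_p`. -/
noncomputable def Hp : A n p := ∏ j, lf n p (l j)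

/-- The relation `y·H = 1` presenting the localization `ℂ[x,s][1/H]`. -/
noncomputable def RI : Ideal (A n p) := Ideal.span {yv n p * Hp n p l - 1}

/-- The ring `ℂ[x,s][1/(l₁⋯l_p)]`, i.e. the free module generated by the symbol
`l₁^{s₁}⋯l_p^{s_p}`. -/
abbrev Rm := A n p ⧸ RI n p l

noncomputable def pr : A n p →ₐ[ℂ] Rm n p l := Ideal.Quotient.mkₐ ℂ _

/-- The constant-coefficient derivation of `A` in the direction `u`, extended to the
localization variable `y` by `∂y = -y²·∂(H)`. -/
noncomputable def d0 (u : Fin n → ℂ) : Derivation ℂ (A n p) (A n p) :=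
  mkDerivation ℂ fun v =>
    Option.casesOn v 0 (fun w => Sum.casesOn w (fun m => (MvPolynomial.C (u m) : A n p)) fun _ => 0)

noncomputable def dA (u : Fin n → ℂ) : Derivation ℂ (A n p) (A n p) :=
  d0 n p u + (-(yv n p) ^ 2 * d0 n p u (Hp n p l)) • pderiv none

lemma pd_none_lf (c : Fin n → ℂ) : pderiv none (lf n p c) = 0 := by
  simp [lf, xv, pderiv_X_of_ne]

lemma pd_none_Hp : pderiv none (Hp n p l) = 0 := by
  have key : ∀ s : Finset (Fin p), pderiv none (∏ j ∈ s, lf n p (l j)) = 0 := by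
    intro s
    induction s using Finset.induction_on with
    | empty => simp
    | insert a s h ih =>
        rw [Finset.prod_insert h, Derivation.leibniz]
        simp [ih, pd_none_lf]
  exact key Finset.univ

lemma d0_yv (u : Fin n → ℂ) : d0 n p u (yv n p) = 0 := by
  simp [d0, yv, mkDerivation_X]

lemma d0_Xnone (u : Fin n → ℂ) : d0 n p u (X none : A n p) = 0 := by
  simp [d0, mkDerivation_X]

lemma dA_gen (u : Fin n → ℂ) :
    dA n p l u (yv n p * Hp n p l - 1) =
      (-(yv n p) * d0 n p u (Hp n p l)) * (yv n p * Hp n p l - 1) := by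
  have h1 : dA n p l u (yv n p) = -(yv n p) ^ 2 * d0 n p u (Hp n p l) := by
    simp [dA, d0_Xnone, yv, smul_eq_mul]
  have h2 : dA n p l u (Hp n p l) = d0 n p u (Hp n p l) := by
    simp [dA, pd_none_Hp, smul_eq_mul]
  have : dA n p l u (yv n p * Hp n p l - 1) =
      yv n p • dA n p l u (Hp n p l) + Hp n p l • dA n p l u (yv n p) := by
    rw [map_sub, Derivation.leibniz]
    simp
  rw [this, h1, h2]
  ring_nf

lemma dA_mem (u : Fin n → ℂ) :
    (RI n p l).restrictScalars ℂ ≤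
      ((RI n p l).restrictScalars ℂ).comap ((dA n p l u) : A n p →ₗ[ℂ] A n p) := by
  intro z hz
  simp only [Submodule.restrictScalars_mem] at hz ⊢
  rw [Submodule.mem_comap]
  simp only [Derivation.coeFn_coe]
  rw [RI, Ideal.mem_span_singleton] at hz
  obtain ⟨t, rfl⟩ := hz
  rw [Derivation.leibniz]
  simp only [Submodule.restrictScalars_mem, smul_eq_mul]
  rw [RI]
  apply Ideal.add_mem
  · exact Ideal.mul_mem_right _ _ (Ideal.subset_span (Set.mem_singleton _))
  · apply Ideal.mul_mem_left
    rw [dA_gen, Ideal.mem_span_singleton]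
    exact Dvd.intro_left _ rfl

/-- The (untwisted) action of the derivation in direction `u` on `ℂ[x,s][1/H]`. -/
noncomputable def dR (u : Fin n → ℂ) : Module.End ℂ (Rm n p l) :=
  (Submodule.Quotient.restrictScalarsEquiv ℂ (RI n p l)).toLinearMap ∘ₗ
    Submodule.mapQ _ _ ((dA n p l u) : A n p →ₗ[ℂ] A n p) (dA_mem n p l u) ∘ₗ
      (Submodule.Quotient.restrictScalarsEquiv ℂ (RI n p l)).symm.toLinearMap

/-- Multiplication by (the image of) a polynomial, as an operator on the symbol module. -/
noncomputable def Mop (a : A n p) : Module.End ℂ (Rm n p l) :=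
  LinearMap.mulLeft ℂ (pr n p l a)

/-- The twisted action of `∂_u` on the module generated by `l₁^{s₁}⋯l_p^{s_p}` :
`∂_u(g·l^s) = (∂_u g)·l^s + g·(∑ₖ sₖ u(lₖ)/lₖ)·l^s`. -/
noncomputable def Top (u : Fin n → ℂ) : Module.End ℂ (Rm n p l) :=
  dR n p l u +
    Mop n p l (∑ k, sv n p k * MvPolynomial.C (ap u (l k)) * yv n p *
      ∏ m ∈ Finset.univ.erase k, lf n p (l m))

/-- The algebra of operators `𝒟 = A_n(ℂ)[s₁,…,s_p]` acting (twistedly) on the module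
generated by the symbol `l₁^{s₁}⋯l_p^{s_p}` : it is generated by the multiplications by
the `xᵢ` and the `sⱼ` and by the twisted partial derivatives. -/
noncomputable def Dalg : Subalgebra ℂ (Module.End ℂ (Rm n p l)) :=
  Algebra.adjoin ℂ
    ((Set.range fun i => Mop n p l (xv n p i)) ∪
     (Set.range fun j => Mop n p l (sv n p j)) ∪
     (Set.range fun i : Fin n => Top n p l (Pi.single i 1)))

theorem _root_.Derivation.map_mem_adjoin {R B : Type*} [CommSemiring R] [CommSemiring B]
    [Algebra R B] (D : Derivation R B B) {s : Set B} (hs : ∀ x ∈ s, D x ∈ Algebra.adjoin R s)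
    {a : B} (ha : a ∈ Algebra.adjoin R s) : D a ∈ Algebra.adjoin R s := by
  induction ha using Algebra.adjoin_induction with
  | mem x hx => exact hs x hx
  | algebraMap r => simp
  | add x y _ _ hx hy => exact (D.map_add x y).symm ▸ add_mem hx hy
  | mul x y hx' hy' hx hy =>
    rw [D.leibniz, smul_eq_mul, smul_eq_mul]
    exact add_mem (mul_mem hx' hy) (mul_mem hy' hx)

theorem _root_.Derivation.map_prod_eq_zero {R B ι : Type*} [CommSemiring R] [CommSemiring B]
    [Algebra R B] (D : Derivation R B B) (s : Finset ι) (f : ι → B) (hf : ∀ i ∈ s, D (f i) = 0) :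
    D (∏ i ∈ s, f i) = 0 := by
  classical
  induction s using Finset.induction_on with
  | empty => simp
  | insert a s ha ih =>
    rw [Finset.prod_insert ha, D.leibniz, hf a (by simp), ih fun i hi => hf i (by simp [hi])]
    simp

theorem _root_.Derivation.sum_apply {R B M ι : Type*} [CommSemiring R] [CommSemiring B]
    [Algebra R B] [AddCommMonoid M] [Module R M] [Module B M] (s : Finset ι)
    (D : ι → Derivation R B M) (a : B) : (∑ i ∈ s, D i) a = ∑ i ∈ s, D i a := by
  rw [← Derivation.coeFnAddMonoidHom_apply, map_sum, Finset.sum_apply]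
  rfl

theorem _root_.Submodule.mapsTo_of_mem_adjoin {R M : Type*} [CommSemiring R] [AddCommMonoid M]
    [Module R M] (N : Submodule R M) {s : Set (Module.End R M)}
    (hs : ∀ f ∈ s, ∀ x ∈ N, f x ∈ N) {f : Module.End R M} (hf : f ∈ Algebra.adjoin R s) :
    ∀ x ∈ N, f x ∈ N := by
  induction hf using Algebra.adjoin_induction with
  | mem f hf => exact hs f hf
  | algebraMap r => exact fun x hx => N.smul_mem r hx
  | add f g _ _ hf hg => exact fun x hx => N.add_mem (hf x hx) (hg x hx)
  | mul f g _ _ hf hg => exact fun x hx => hf _ (hg x hx)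

theorem _root_.MvPolynomial.X_add_one_dvd_sub_aeval_update {R σ : Type*} [CommRing R]
    [DecidableEq σ] (j : σ) (b : MvPolynomial σ R) :
    X j + 1 ∣ b - aeval (Function.update X j (-1)) b := by
  rw [← Ideal.mem_span_singleton, ← Ideal.Quotient.eq]
  have hcomp : (Ideal.Quotient.mkₐ R (Ideal.span {X j + 1})).comp
      (aeval (Function.update X j (-1))) = Ideal.Quotient.mkₐ R _ := by
    refine algHom_ext fun k => ?_
    rcases eq_or_ne k j with rfl | hk
    · simp only [AlgHom.comp_apply, aeval_X, Function.update_self, Ideal.Quotient.mkₐ_eq_mk,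
        map_neg, map_one]
      rw [neg_eq_iff_add_eq_zero, ← map_one (Ideal.Quotient.mk _), ← map_add,
        Ideal.Quotient.eq_zero_iff_mem, add_comm]
      exact Ideal.mem_span_singleton_self _
    · simp [Function.update_of_ne hk]
  exact (DFunLike.congr_fun hcomp b).symm

theorem _root_.MvPolynomial.prod_X_add_one_dvd {R σ : Type*} [CommRing R] [IsDomain R]
    [DecidableEq σ] (S : Finset σ) {b : MvPolynomial σ R}
    (hb : ∀ j ∈ S, aeval (Function.update (X (R := R)) j (-1)) b = 0) : ∏ j ∈ S, (X j + 1) ∣ b := by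
  induction S using Finset.induction_on generalizing b with
  | empty => simp
  | insert j S hj ih =>
    obtain ⟨c, rfl⟩ : (X j + 1 : MvPolynomial σ R) ∣ b := by
      simpa only [hb j (Finset.mem_insert_self j S), sub_zero] using
        X_add_one_dvd_sub_aeval_update j b
    have hne : (X j + 1 : MvPolynomial σ R) ≠ 0 := fun h => by simpa using congr_arg (eval 0) h
    rw [Finset.prod_insert hj]
    refine mul_dvd_mul_left _ (ih fun k hk => ?_)
    have hkj : k ≠ j := ne_of_mem_of_not_mem hk hj
    simpa [Function.update_of_ne hkj.symm, hne] using hb k (Finset.mem_insert_of_mem hk)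

variable {n p l} in
lemma exists_ap_eq (hl : LinearIndependent ℂ l) (w : Fin p → ℂ) :
    ∃ u : Fin n → ℂ, ∀ k, ap u (l k) = w k := by
  have hrange : LinearMap.range (Matrix.of l).mulVecLin = ⊤ :=
    Submodule.eq_top_of_finrank_eq <| by
      rw [← Matrix.rank, LinearIndependent.rank_matrix (M := Matrix.of l) hl,
        Module.finrank_fin_fun, Fintype.card_fin]
  obtain ⟨u, hu⟩ := LinearMap.range_eq_top.1 hrange w
  exact ⟨u, fun k => by simp [← hu, ap, Matrix.mulVec, dotProduct, mul_comm]⟩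

lemma pr_surjective : Function.Surjective (pr n p l) := Ideal.Quotient.mkₐ_surjective ℂ _

@[simp] lemma pr_C (r : ℂ) : pr n p l (C r) = algebraMap ℂ (Rm n p l) r :=
  (pr n p l).commutes r

lemma pr_yv_mul_Hp : pr n p l (yv n p * Hp n p l) = 1 := by
  rw [← map_one (pr n p l), pr, Ideal.Quotient.mkₐ_eq_mk, Ideal.Quotient.eq]
  exact Ideal.subset_span rfl

lemma dR_pr (u : Fin n → ℂ) (a : A n p) : dR n p l u (pr n p l a) = pr n p l (dA n p l u a) :=
  rfl

noncomputable def dRDer (u : Fin n → ℂ) : Derivation ℂ (Rm n p l) (Rm n p l) :=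
  Derivation.mk' (dR n p l u) fun a b => by
    obtain ⟨a, rfl⟩ := pr_surjective n p l a
    obtain ⟨b, rfl⟩ := pr_surjective n p l b
    simp only [← map_mul, dR_pr, Derivation.leibniz, map_add, smul_eq_mul]

@[simp] lemma dRDer_apply (u : Fin n → ℂ) (z : Rm n p l) : dRDer n p l u z = dR n p l u z := rfl

lemma dA_X_some (u : Fin n → ℂ) (w : Fin n ⊕ Fin p) :
    dA n p l u (X (some w)) = d0 n p u (X (some w)) := by
  simp [dA]

lemma dA_xv (u : Fin n → ℂ) (i : Fin n) : dA n p l u (xv n p i) = C (u i) := by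
  simp [xv, dA_X_some, d0, mkDerivation_X]

lemma dA_sv (u : Fin n → ℂ) (k : Fin p) : dA n p l u (sv n p k) = 0 := by
  simp [sv, dA_X_some, d0, mkDerivation_X]

lemma dA_lf (u : Fin n → ℂ) (c : Fin n → ℂ) : dA n p l u (lf n p c) = C (ap u c) := by
  simp [lf, dA_xv, ap, mul_comm]

lemma d0_eq_sum (u : Fin n → ℂ) : d0 n p u = ∑ i, u i • d0 n p (Pi.single i 1) := by
  refine MvPolynomial.derivation_ext fun v => ?_
  rcases v with _ | m | k <;> simp [Derivation.sum_apply, d0, mkDerivation_X, Pi.single_apply,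
    MvPolynomial.smul_eq_C_mul]

lemma dA_eq_sum (u : Fin n → ℂ) (a : A n p) :
    dA n p l u a = ∑ i, u i • dA n p l (Pi.single i 1) a := by
  have : dA n p l u = ∑ i, u i • dA n p l (Pi.single i 1) := by
    refine MvPolynomial.derivation_ext fun v => ?_
    rcases v with _ | w
    · simp [dA, Derivation.sum_apply, d0_eq_sum n p u, Finset.mul_sum, Finset.sum_add_distrib]
    · simp [dA_X_some, Derivation.sum_apply, d0_eq_sum n p u]
  simp [this, Derivation.sum_apply]

noncomputable def lfInv (k : Fin p) : A n p := yv n p * ∏ m ∈ Finset.univ.erase k, lf n p (l m)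

lemma pr_lf_mul_lfInv (k : Fin p) : pr n p l (lf n p (l k)) * pr n p l (lfInv n p l k) = 1 := by
  rw [← map_mul, lfInv, mul_left_comm,
    Finset.mul_prod_erase _ (fun m => lf n p (l m)) (Finset.mem_univ k), ← Hp, pr_yv_mul_Hp]

noncomputable def twist (u : Fin n → ℂ) : Rm n p l :=
  ∑ k, ap u (l k) • (pr n p l (sv n p k) * pr n p l (lfInv n p l k))

lemma Top_apply (u : Fin n → ℂ) (z : Rm n p l) :
    Top n p l u z = dRDer n p l u z + twist n p l u * z := by
  simp only [Top, Mop, lfInv, twist, LinearMap.add_apply, LinearMap.mulLeft_apply, dRDer_apply,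
    map_sum, map_mul, ← MvPolynomial.algebraMap_eq, AlgHom.commutes]
  congr 2
  refine Finset.sum_congr rfl fun k _ => ?_
  rw [Algebra.smul_def (A := Rm n p l)]
  ring

lemma sum_ap_smul {M : Type*} [AddCommMonoid M] [Module ℂ M] (u : Fin n → ℂ) (t : Fin p → M) :
    ∑ k, ap u (l k) • t k = ∑ i, u i • ∑ k, ap (Pi.single i 1) (l k) • t k := by
  simp only [ap, Pi.single_apply, ite_mul, one_mul, zero_mul, Finset.sum_ite_eq', Finset.mem_univ,
    if_true, Finset.sum_smul, Finset.smul_sum, smul_smul]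
  exact Finset.sum_comm

lemma Top_eq_sum (u : Fin n → ℂ) : Top n p l u = ∑ i, u i • Top n p l (Pi.single i 1) := by
  refine LinearMap.ext fun z => ?_
  obtain ⟨a, rfl⟩ := pr_surjective n p l z
  rw [LinearMap.sum_apply]
  simp only [LinearMap.smul_apply, Top_apply, dRDer_apply, dR_pr, twist]
  rw [sum_ap_smul, dA_eq_sum, map_sum]
  simp only [map_smul, Finset.sum_mul, smul_mul_assoc, smul_add, Finset.sum_add_distrib]

lemma Top_mem_Dalg (u : Fin n → ℂ) : Top n p l u ∈ Dalg n p l := by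
  rw [Top_eq_sum]
  exact Subalgebra.sum_mem _ fun i _ =>
    Subalgebra.smul_mem _ (Algebra.subset_adjoin (Set.mem_union_right _ (Set.mem_range_self i))) _

lemma Mop_aeval_mem_Dalg (c : MvPolynomial (Fin p) ℂ) :
    Mop n p l (aeval (sv n p) c) ∈ Dalg n p l := by
  let φ : A n p →ₐ[ℂ] Module.End ℂ (Rm n p l) := (Algebra.lmul ℂ (Rm n p l)).comp (pr n p l)
  have hle : Algebra.adjoin ℂ (Set.range (sv n p)) ≤ (Dalg n p l).comap φ :=
    Algebra.adjoin_le <| Set.range_subset_iff.2 fun k =>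
      Algebra.subset_adjoin (Set.mem_union_left _ (Set.mem_union_right _ ⟨k, rfl⟩))
  exact hle (aeval_range (R := ℂ) (sv n p) ▸ AlgHom.mem_range_self _ c)

section DualVector

variable {n p l} {j : Fin p} {u : Fin n → ℂ}

lemma Top_apply_pr_lf_mul (hu : ∀ k, ap u (l k) = if k = j then 1 else 0) {g : A n p}
    (hg : dA n p l u g = 0) :
    Top n p l u (pr n p l (lf n p (l j) * g)) = pr n p l ((sv n p j + 1) * g) := by
  have hdual : ∀ k, ap u (l k) • (pr n p l (sv n p k) * pr n p l (lfInv n p l k)) =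
      if k = j then pr n p l (sv n p j) * pr n p l (lfInv n p l j) else 0 := by
    intro k; split_ifs with h <;> simp [hu, h]
  rw [Top_apply, twist, dRDer_apply, dR_pr, Derivation.leibniz, hg, dA_lf, hu, Finset.sum_congr rfl
    fun k _ => hdual k, Finset.sum_ite_eq']
  simp only [Finset.mem_univ, if_true, map_mul, map_add, map_one, smul_eq_mul, mul_one,
    mul_zero, zero_add]
  linear_combination (pr n p l (sv n p j) * pr n p l g) * pr_lf_mul_lfInv n p l j

lemma dA_prod_eq_zero (hu : ∀ k, ap u (l k) = if k = j then 1 else 0) (S T : Finset (Fin p))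
    (hT : j ∉ T) :
    dA n p l u ((∏ k ∈ S, (sv n p k + 1)) * ∏ m ∈ T, lf n p (l m)) = 0 := by
  have hs : dA n p l u (∏ k ∈ S, (sv n p k + 1)) = 0 :=
    Derivation.map_prod_eq_zero _ _ _ fun k _ => by simp [dA_sv]
  have hl : dA n p l u (∏ m ∈ T, lf n p (l m)) = 0 :=
    Derivation.map_prod_eq_zero _ _ _ fun m hm => by
      rw [dA_lf, hu, if_neg (ne_of_mem_of_not_mem hm hT), map_zero]
  rw [Derivation.leibniz, hs, hl, smul_zero, smul_zero, add_zero]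

end DualVector

lemma exists_mem_Dalg_apply_Hp_eq (u : Fin p → Fin n → ℂ)
    (hu : ∀ j k, ap (u j) (l k) = if k = j then 1 else 0) (S : Finset (Fin p)) :
    ∃ P ∈ Dalg n p l,
      P (pr n p l (Hp n p l)) = pr n p l ((∏ k ∈ S, (sv n p k + 1)) * ∏ m ∈ Sᶜ, lf n p (l m)) := by
  classical
  induction S using Finset.induction_on with
  | empty => exact ⟨1, Subalgebra.one_mem _, by simp [Hp]⟩
  | insert j S hj ih =>
    obtain ⟨P, hP, hPH⟩ := ih
    refine ⟨Top n p l (u j) * P, Subalgebra.mul_mem _ (Top_mem_Dalg n p l (u j)) hP, ?_⟩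
    have hcompl : Sᶜ = insert j (insert j S)ᶜ := by
      rw [Finset.compl_insert, Finset.insert_erase (Finset.mem_compl.2 hj)]
    rw [Module.End.mul_apply, hPH, hcompl, Finset.prod_insert (by simp), mul_left_comm,
      Top_apply_pr_lf_mul (hu j) (dA_prod_eq_zero (hu j) _ _ (by simp)), ← mul_assoc,
      Finset.prod_insert hj]

lemma exists_mem_Dalg_of_dvd (hl : LinearIndependent ℂ l) {b : MvPolynomial (Fin p) ℂ}
    (hb : (∏ i, (X i + 1)) ∣ b) :
    ∃ P ∈ Dalg n p l, P (pr n p l (Hp n p l)) = pr n p l (aeval (sv n p) b) := by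
  obtain ⟨c, rfl⟩ := hb
  choose u hu using fun j => exists_ap_eq hl fun k => if k = j then 1 else 0
  obtain ⟨P, hP, hPH⟩ := exists_mem_Dalg_apply_Hp_eq n p l u hu Finset.univ
  refine ⟨Mop n p l (aeval (sv n p) c) * P,
    Subalgebra.mul_mem _ (Mop_aeval_mem_Dalg n p l c) hP, ?_⟩
  rw [Module.End.mul_apply, hPH, Finset.compl_univ, Finset.prod_empty, mul_one, Mop,
    LinearMap.mulLeft_apply, ← map_mul, map_mul, map_prod, mul_comm]
  simp [sv]

noncomputable def polyAlg : Subalgebra ℂ (Rm n p l) :=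
  Algebra.adjoin ℂ (Set.range fun i => pr n p l (xv n p i))

lemma pr_lf_mem_polyAlg (c : Fin n → ℂ) : pr n p l (lf n p c) ∈ polyAlg n p l := by
  simp only [lf, map_sum, map_mul, pr_C]
  exact Subalgebra.sum_mem _ fun i _ =>
    mul_mem (Subalgebra.algebraMap_mem _ _) (Algebra.subset_adjoin (Set.mem_range_self i))

lemma pr_prod_lf_mem_polyAlg (T : Finset (Fin p)) :
    pr n p l (∏ m ∈ T, lf n p (l m)) ∈ polyAlg n p l := by
  rw [map_prod]
  exact Subalgebra.prod_mem _ fun m _ => pr_lf_mem_polyAlg n p l _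

lemma dRDer_mem_polyAlg (u : Fin n → ℂ) {z : Rm n p l} (hz : z ∈ polyAlg n p l) :
    dRDer n p l u z ∈ polyAlg n p l := by
  refine Derivation.map_mem_adjoin _ ?_ hz
  rintro _ ⟨i, rfl⟩
  rw [dRDer_apply, dR_pr, dA_xv, pr_C]
  exact Subalgebra.algebraMap_mem _ _

-- Functions regular along `l_j = 0`; `y·l_j` is `1/∏_{m≠j} l_m`.
noncomputable def regAlong (j : Fin p) : Subalgebra ℂ (Rm n p l) :=
  Algebra.adjoin ℂ ((Set.range fun i => pr n p l (xv n p i)) ∪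
    (Set.range fun k => pr n p l (sv n p k)) ∪ {pr n p l (yv n p * lf n p (l j))})

lemma polyAlg_le_regAlong (j : Fin p) : polyAlg n p l ≤ regAlong n p l j :=
  Algebra.adjoin_mono (Set.subset_union_of_subset_left Set.subset_union_left _)

lemma pr_sv_mem_regAlong (j k : Fin p) : pr n p l (sv n p k) ∈ regAlong n p l j :=
  Algebra.subset_adjoin (Set.mem_union_left _ (Set.mem_union_right _ (Set.mem_range_self k)))

lemma pr_yv_mul_lf_mem_regAlong (j : Fin p) :
    pr n p l (yv n p * lf n p (l j)) ∈ regAlong n p l j :=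
  Algebra.subset_adjoin (Set.mem_union_right _ rfl)

lemma pr_lfInv_mem_regAlong {j k : Fin p} (hk : k ≠ j) :
    pr n p l (lfInv n p l k) ∈ regAlong n p l j := by
  rw [lfInv, ← Finset.mul_prod_erase _ _ (Finset.mem_erase.2 ⟨hk.symm, Finset.mem_univ j⟩),
    ← mul_assoc, map_mul]
  exact mul_mem (pr_yv_mul_lf_mem_regAlong n p l j)
    (polyAlg_le_regAlong n p l j (pr_prod_lf_mem_polyAlg n p l _))

lemma dRDer_mem_regAlong (j : Fin p) (u : Fin n → ℂ) {z : Rm n p l}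
    (hz : z ∈ regAlong n p l j) : dRDer n p l u z ∈ regAlong n p l j := by
  refine Derivation.map_mem_adjoin _ ?_ hz
  rintro _ ((⟨i, rfl⟩ | ⟨k, rfl⟩) | rfl)
  · rw [dRDer_apply, dR_pr, dA_xv, pr_C]
    exact Subalgebra.algebraMap_mem _ _
  · rw [dRDer_apply, dR_pr, dA_sv, map_zero]
    exact zero_mem _
  · have hinv : pr n p l (yv n p * lf n p (l j)) *
        pr n p l (∏ m ∈ Finset.univ.erase j, lf n p (l m)) = 1 := by
      rw [← pr_lf_mul_lfInv n p l j, ← map_mul, ← map_mul, lfInv]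
      ring_nf
    rw [Derivation.leibniz_of_mul_eq_one _ hinv, smul_eq_mul]
    refine mul_mem (neg_mem (pow_mem (pr_yv_mul_lf_mem_regAlong n p l j) 2))
      (polyAlg_le_regAlong n p l j (dRDer_mem_polyAlg n p l u (pr_prod_lf_mem_polyAlg n p l _)))

noncomputable def vanAlong (j : Fin p) : Submodule ℂ (Rm n p l) where
  carrier := {z | ∃ r, ∃ a ∈ regAlong n p l j,
    z = pr n p l (sv n p j + 1) * r + pr n p l (lf n p (l j)) * a}
  add_mem' := by
    rintro _ _ ⟨r, a, ha, rfl⟩ ⟨r', a', ha', rfl⟩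
    exact ⟨r + r', a + a', add_mem ha ha', by ring⟩
  zero_mem' := ⟨0, 0, zero_mem _, by simp⟩
  smul_mem' := by
    rintro c _ ⟨r, a, ha, rfl⟩
    exact ⟨c • r, c • a, Subalgebra.smul_mem _ ha c, by simp only [smul_add, mul_smul_comm]⟩

lemma mul_mem_vanAlong {j : Fin p} {w z : Rm n p l} (hw : w ∈ regAlong n p l j)
    (hz : z ∈ vanAlong n p l j) : w * z ∈ vanAlong n p l j := by
  obtain ⟨r, a, ha, rfl⟩ := hz
  exact ⟨w * r, w * a, mul_mem hw ha, by ring⟩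

lemma pr_Hp_mem_vanAlong (j : Fin p) : pr n p l (Hp n p l) ∈ vanAlong n p l j :=
  ⟨0, _, polyAlg_le_regAlong n p l j (pr_prod_lf_mem_polyAlg n p l (Finset.univ.erase j)), by
    rw [mul_zero, zero_add, ← map_mul, Hp,
      Finset.mul_prod_erase _ (fun m => lf n p (l m)) (Finset.mem_univ j)]⟩

lemma exists_twist_mul_lf (j : Fin p) (u : Fin n → ℂ) :
    ∃ G ∈ regAlong n p l j,
      twist n p l u * pr n p l (lf n p (l j)) =
        ap u (l j) • pr n p l (sv n p j) + pr n p l (lf n p (l j)) * G := by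
  refine ⟨∑ k ∈ Finset.univ.erase j, ap u (l k) • (pr n p l (sv n p k) * pr n p l (lfInv n p l k)),
    Subalgebra.sum_mem _ fun k hk => Subalgebra.smul_mem _ (mul_mem (pr_sv_mem_regAlong n p l j k)
      (pr_lfInv_mem_regAlong n p l (Finset.ne_of_mem_erase hk))) _, ?_⟩
  rw [twist, ← Finset.add_sum_erase _ _ (Finset.mem_univ j), add_mul, smul_mul_assoc, mul_assoc,
    mul_comm (pr n p l (lfInv n p l j)), pr_lf_mul_lfInv, mul_one, mul_comm]

lemma Top_mem_vanAlong (j : Fin p) (u : Fin n → ℂ) {z : Rm n p l} (hz : z ∈ vanAlong n p l j) :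
    Top n p l u z ∈ vanAlong n p l j := by
  obtain ⟨r, a, ha, rfl⟩ := hz
  obtain ⟨G, hG, htwist⟩ := exists_twist_mul_lf n p l j u
  have hs : dRDer n p l u (pr n p l (sv n p j + 1)) = 0 := by
    rw [dRDer_apply, dR_pr, map_add, dA_sv, Derivation.map_one_eq_zero, add_zero, map_zero]
  have hl : dRDer n p l u (pr n p l (lf n p (l j))) = algebraMap ℂ _ (ap u (l j)) := by
    rw [dRDer_apply, dR_pr, dA_lf, pr_C]
  refine ⟨dRDer n p l u r + twist n p l u * r + ap u (l j) • a, dRDer n p l u a + G * a,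
    add_mem (dRDer_mem_regAlong n p l j u ha) (mul_mem hG ha), ?_⟩
  rw [Top_apply, map_add, Derivation.leibniz, Derivation.leibniz, hs, hl]
  simp only [smul_eq_mul, Algebra.smul_def (A := Rm n p l), map_add, map_one] at htwist ⊢
  linear_combination a * htwist

lemma mapsTo_vanAlong_of_mem_Dalg (j : Fin p) {P : Module.End ℂ (Rm n p l)}
    (hP : P ∈ Dalg n p l) : ∀ z ∈ vanAlong n p l j, P z ∈ vanAlong n p l j := by
  refine Submodule.mapsTo_of_mem_adjoin _ ?_ hP
  rintro _ ((⟨i, rfl⟩ | ⟨k, rfl⟩) | ⟨i, rfl⟩) z hz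
  · exact mul_mem_vanAlong n p l
      (polyAlg_le_regAlong n p l j (Algebra.subset_adjoin (Set.mem_range_self i))) hz
  · exact mul_mem_vanAlong n p l (pr_sv_mem_regAlong n p l j k) hz
  · exact Top_mem_vanAlong n p l j _ hz

section LineRestriction

variable (j : Fin p) (ξ η : Fin n → ℂ)

-- Restriction to the line `x = ξ + tη` at `s_j = -1`; `y = 1/H` goes to `t⁻¹`, since `H`
-- restricts to `t` on a transversal line.
noncomputable def lineEval : A n p →ₐ[ℂ] LaurentPolynomial (MvPolynomial (Fin p) ℂ) :=
  aeval fun v => Option.elim v (LaurentPolynomial.T (-1))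
    (Sum.elim (fun i => algebraMap ℂ _ (ξ i) + LaurentPolynomial.T 1 * algebraMap ℂ _ (η i))
      fun k => algebraMap (MvPolynomial (Fin p) ℂ) _ (Function.update X j (-1) k))

def IsTransversalLine : Prop :=
  ∀ k, ap ξ (l k) = (if k = j then 0 else 1) ∧ ap η (l k) = if k = j then 1 else 0

lemma lineEval_yv : lineEval n p j ξ η (yv n p) = LaurentPolynomial.T (-1) := by
  simp only [lineEval, yv, aeval_X, Option.elim_none]

lemma lineEval_sv (k : Fin p) :
    lineEval n p j ξ η (sv n p k) =
      algebraMap (MvPolynomial (Fin p) ℂ) _ (Function.update X j (-1) k) := by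
  simp only [lineEval, sv, aeval_X, Option.elim_some, Sum.elim_inr]

lemma lineEval_lf (c : Fin n → ℂ) :
    lineEval n p j ξ η (lf n p c) =
      algebraMap ℂ _ (ap ξ c) + LaurentPolynomial.T 1 * algebraMap ℂ _ (ap η c) := by
  simp only [lineEval, lf, xv, ap, map_sum, map_mul, aeval_C, aeval_X, Option.elim_some,
    Sum.elim_inl, Finset.mul_sum, ← Finset.sum_add_distrib]
  refine Finset.sum_congr rfl fun i _ => ?_
  ring

variable {n p l j ξ η}

lemma lineEval_lf_l (hline : IsTransversalLine n p l j ξ η) (k : Fin p) :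
    lineEval n p j ξ η (lf n p (l k)) = if k = j then LaurentPolynomial.T 1 else 1 := by
  rw [lineEval_lf, (hline k).1, (hline k).2]
  split_ifs <;> simp

lemma RI_le_ker_lineEval (hline : IsTransversalLine n p l j ξ η) :
    RI n p l ≤ RingHom.ker (lineEval n p j ξ η) := by
  have hH : lineEval n p j ξ η (Hp n p l) = LaurentPolynomial.T 1 := by
    simp only [Hp, map_prod, lineEval_lf_l hline, Finset.prod_ite_eq', Finset.mem_univ, if_true]
  rw [RI, Ideal.span_le, Set.singleton_subset_iff, SetLike.mem_coe, RingHom.mem_ker, map_sub,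
    map_mul, hH, lineEval_yv, map_one, ← LaurentPolynomial.T_add]
  simp

noncomputable def lineEvalQ (hline : IsTransversalLine n p l j ξ η) :
    Rm n p l →ₐ[ℂ] LaurentPolynomial (MvPolynomial (Fin p) ℂ) :=
  Ideal.Quotient.liftₐ _ (lineEval n p j ξ η) fun _ ha => RI_le_ker_lineEval hline ha

lemma lineEvalQ_pr (hline : IsTransversalLine n p l j ξ η) (a : A n p) :
    lineEvalQ hline (pr n p l a) = lineEval n p j ξ η a := rfl

lemma regAlong_le_comap_lineEvalQ (hline : IsTransversalLine n p l j ξ η) :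
    regAlong n p l j ≤
      (Polynomial.toLaurentAlg.range.restrictScalars ℂ).comap (lineEvalQ hline) := by
  have hT : LaurentPolynomial.T 1 ∈ (Polynomial.toLaurentAlg (R := MvPolynomial (Fin p) ℂ)).range :=
    ⟨Polynomial.X, Polynomial.toLaurent_X⟩
  refine Algebra.adjoin_le ?_
  rintro _ ((⟨i, rfl⟩ | ⟨k, rfl⟩) | rfl) <;>
    rw [SetLike.mem_coe, Subalgebra.mem_comap, lineEvalQ_pr, Subalgebra.mem_restrictScalars]
  · simp only [lineEval, xv, aeval_X, Option.elim_some, Sum.elim_inl]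
    exact add_mem (Subalgebra.algebraMap_mem _ _) (mul_mem hT (Subalgebra.algebraMap_mem _ _))
  · rw [lineEval_sv]
    exact Subalgebra.algebraMap_mem _ _
  · rw [map_mul, lineEval_lf_l hline, if_pos rfl, lineEval_yv, ← LaurentPolynomial.T_add]
    simp

lemma aeval_update_eq_zero_of_mem_vanAlong (hline : IsTransversalLine n p l j ξ η)
    {b : MvPolynomial (Fin p) ℂ}
    (hb : pr n p l (aeval (sv n p) b) ∈ vanAlong n p l j) :
    aeval (Function.update (X (R := ℂ)) j (-1)) b = 0 := by
  obtain ⟨r, a, ha, hba⟩ := hb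
  obtain ⟨w, hw⟩ : ∃ w, Polynomial.toLaurent w = lineEvalQ hline a :=
    regAlong_le_comap_lineEvalQ hline ha
  have hlhs : lineEvalQ hline (pr n p l (aeval (sv n p) b)) =
      Polynomial.toLaurent (Polynomial.C (aeval (Function.update X j (-1)) b)) := by
    have hs : (fun k => lineEval n p j ξ η (sv n p k)) =
        algebraMap (MvPolynomial (Fin p) ℂ) _ ∘ Function.update X j (-1) :=
      funext (lineEval_sv n p j ξ η)
    rw [lineEvalQ_pr, comp_aeval_apply, hs, aeval_algebraMap_apply]
    exact (Polynomial.toLaurentAlg.commutes _).symm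
  have hrhs : lineEvalQ hline (pr n p l (sv n p j + 1) * r + pr n p l (lf n p (l j)) * a) =
      Polynomial.toLaurent (Polynomial.X * w) := by
    rw [map_add, map_mul, map_mul, lineEvalQ_pr, lineEvalQ_pr, map_add, lineEval_sv,
      Function.update_self, map_one, map_neg, map_one, neg_add_cancel, zero_mul, zero_add,
      lineEval_lf_l hline, if_pos rfl, ← hw, map_mul, Polynomial.toLaurent_X]
  have h := Polynomial.toLaurent_injective (hlhs.symm.trans ((congr_arg _ hba).trans hrhs))
  simpa using congr_arg (Polynomial.coeff · 0) h

end LineRestriction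

lemma prod_dvd_of_exists_mem_Dalg (hl : LinearIndependent ℂ l) {b : MvPolynomial (Fin p) ℂ}
    (hb : ∃ P ∈ Dalg n p l, P (pr n p l (Hp n p l)) = pr n p l (aeval (sv n p) b)) :
    (∏ i, (X i + 1)) ∣ b := by
  obtain ⟨P, hP, hPb⟩ := hb
  refine prod_X_add_one_dvd Finset.univ fun j _ => ?_
  obtain ⟨ξ, hξ⟩ := exists_ap_eq hl fun k => if k = j then 0 else 1
  obtain ⟨η, hη⟩ := exists_ap_eq hl fun k => if k = j then 1 else 0
  refine aeval_update_eq_zero_of_mem_vanAlong (fun k => ⟨hξ k, hη k⟩) ?_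
  exact hPb ▸ mapsTo_vanAlong_of_mem_Dalg n p l j hP _ (pr_Hp_mem_vanAlong n p l j)

theorem stmt19_general (n p : ℕ) (l : Fin p → Fin n → ℂ)
    (hl : LinearIndependent ℂ l) (b : MvPolynomial (Fin p) ℂ) :
    (∃ P ∈ Dalg n p l,
        P (pr n p l (Hp n p l)) = pr n p l (MvPolynomial.aeval (sv n p) b)) ↔
      (∏ i, (MvPolynomial.X i + 1)) ∣ b :=
  ⟨prod_dvd_of_exists_mem_Dalg n p l hl, exists_mem_Dalg_of_dvd n p l hl⟩

/-- for `p ≤ n` and linearly independent linear forms `l₁,…,l_p` on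
`ℂⁿ`, the Bernstein ideal `ℬ(l₁,…,l_p)` is principal, generated by `∏ᵢ(sᵢ+1)`. -/
theorem stmt19 (n p : ℕ) (hp : p ≤ n) (l : Fin p → Fin n → ℂ)
    (hl : LinearIndependent ℂ l) (b : MvPolynomial (Fin p) ℂ) :
    (∃ P ∈ Dalg n p l,
        P (pr n p l (Hp n p l)) = pr n p l (MvPolynomial.aeval (sv n p) b)) ↔
      (∏ i, (MvPolynomial.X i + 1)) ∣ b :=
  stmt19_general n p l hl b

end Paper
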